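/- arXiv:2009.01777 — 2 statements merged into one kernel-verified Lean document; each statement's English description precedes it below -/
import Mathlib

section
/- For every interaction i ∈ Int and lifeline l ∈ L with avoids(i,l) = ⊤: Accept(prune(i,l)) = { ς ∈ Accept(i) | no action of ς occurs on lifeline l }. In particular Accept(prune(i,l)) ⊆ Accept(i), every trace of Accept(prune(i,l)) contains no action on l, and Accept(prune(i,l)) is the maximum such subset of Accept(i). -/
/-- An action `l!m` (emission, `isEmission = true`) or `l?m` (reception),
occurring on lifeline `lf` (lifelines are `Fin n`) carrying message `msg : M`. -/
structure MAction (n : ℕ) (M : Type) where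
  lf : Fin n
  isEmission : Bool
  msg : M

/-- Interaction terms. -/
inductive Interaction (n : ℕ) (M : Type) : Type where
  | empty : Interaction n M
  | act : MAction n M → Interaction n M
  | strict : Interaction n M → Interaction n M → Interaction n M
  | seq : Interaction n M → Interaction n M → Interaction n M
  | alt : Interaction n M → Interaction n M → Interaction n M
  | par : Interaction n M → Interaction n M → Interaction n M
  | loopStrict : Interaction n M → Interaction n M
  | loopSeq : Interaction n M → Interaction n M
  | loopPar : Interaction n M → Interaction n M

namespace Interaction

variable {n : ℕ} {M : Type}

/-- `exp_ε` : does the interaction (statically) express the empty trace. -/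
def expEps : Interaction n M → Bool
  | empty => true
  | act _ => false
  | strict i1 i2 => expEps i1 && expEps i2
  | seq i1 i2 => expEps i1 && expEps i2
  | par i1 i2 => expEps i1 && expEps i2
  | alt i1 i2 => expEps i1 || expEps i2
  | loopStrict _ => true
  | loopSeq _ => true
  | loopPar _ => true

/-- `avoids i l` : the interaction may avoid expressing any action on lifeline `l`. -/
def avoids : Interaction n M → Fin n → Bool
  | empty, _ => true
  | act a, l => decide (a.lf ≠ l)
  | strict i1 i2, l => avoids i1 l && avoids i2 l
  | seq i1 i2, l => avoids i1 l && avoids i2 l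
  | par i1 i2, l => avoids i1 l && avoids i2 l
  | alt i1 i2, l => avoids i1 l || avoids i2 l
  | loopStrict _, _ => true
  | loopSeq _, _ => true
  | loopPar _, _ => true

/-- Positions in Dewey notation : words over {1,2}, encoded as lists of booleans
(`false` = 1 = left, `true` = 2 = right). `subAt i p` is the sub-interaction of `i`
at position `p` (None if `p ∉ pos(i)`). -/
def subAt : Interaction n M → List Bool → Option (Interaction n M)
  | i, [] => some i
  | strict i1 _, false :: p => subAt i1 p
  | strict _ i2, true :: p => subAt i2 p
  | seq i1 _, false :: p => subAt i1 p
  | seq _ i2, true :: p => subAt i2 p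
  | alt i1 _, false :: p => subAt i1 p
  | alt _ i2, true :: p => subAt i2 p
  | par i1 _, false :: p => subAt i1 p
  | par _ i2, true :: p => subAt i2 p
  | loopStrict i1, false :: p => subAt i1 p
  | loopSeq i1, false :: p => subAt i1 p
  | loopPar i1, false :: p => subAt i1 p
  | _, _ :: _ => none

/-- `p ∈ pos(i)` -/
def Pos (i : Interaction n M) (p : List Bool) : Prop := (subAt i p).isSome

/-- The frontier `front(i)` of immediately executable action positions. -/
def front : Interaction n M → Finset (List Bool)
  | empty => ∅
  | act _ => {[]}
  | strict i1 i2 =>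
      (front i1).image (false :: ·) ∪
      (if expEps i1 then (front i2).image (true :: ·) else ∅)
  | seq i1 i2 =>
      (front i1).image (false :: ·) ∪
      (((front i2).filter (fun p =>
          (match subAt i2 p with
           | some (act a) => avoids i1 a.lf
           | _ => false) = true)).image (true :: ·))
  | alt i1 i2 => (front i1).image (false :: ·) ∪ (front i2).image (true :: ·)
  | par i1 i2 => (front i1).image (false :: ·) ∪ (front i2).image (true :: ·)
  | loopStrict i1 => (front i1).image (false :: ·)
  | loopSeq i1 => (front i1).image (false :: ·)
  | loopPar i1 => (front i1).image (false :: ·)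

/-- Pruning `prune(i,l)` (meaningful when `avoids i l`). -/
def prune : Interaction n M → Fin n → Interaction n M
  | empty, _ => empty
  | act a, _ => act a
  | strict i1 i2, l => strict (prune i1 l) (prune i2 l)
  | seq i1 i2, l => seq (prune i1 l) (prune i2 l)
  | par i1 i2, l => par (prune i1 l) (prune i2 l)
  | alt i1 i2, l =>
      if avoids i1 l then
        if avoids i2 l then alt (prune i1 l) (prune i2 l) else prune i1 l
      else prune i2 l
  | loopStrict i1, l => if avoids i1 l then loopStrict (prune i1 l) else empty
  | loopSeq i1, l => if avoids i1 l then loopSeq (prune i1 l) else empty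
  | loopPar i1, l => if avoids i1 l then loopPar (prune i1 l) else empty

/-- The small-step execution function `χ` (defined exactly on `p ∈ front i`). -/
def exec : Interaction n M → List Bool → Option (Interaction n M × MAction n M)
  | act a, [] => some (empty, a)
  | strict i1 i2, false :: p => (exec i1 p).map (fun r => (strict r.1 i2, r.2))
  | strict _ i2, true :: p => exec i2 p
  | seq i1 i2, false :: p => (exec i1 p).map (fun r => (seq r.1 i2, r.2))
  | seq i1 i2, true :: p => (exec i2 p).map (fun r => (seq (prune i1 r.2.lf) r.1, r.2))
  | par i1 i2, false :: p => (exec i1 p).map (fun r => (par r.1 i2, r.2))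
  | par i1 i2, true :: p => (exec i2 p).map (fun r => (par i1 r.1, r.2))
  | alt i1 _, false :: p => exec i1 p
  | alt _ i2, true :: p => exec i2 p
  | loopStrict i1, false :: p => (exec i1 p).map (fun r => (strict r.1 (loopStrict i1), r.2))
  | loopSeq i1, false :: p => (exec i1 p).map (fun r => (seq r.1 (loopSeq i1), r.2))
  | loopPar i1, false :: p => (exec i1 p).map (fun r => (par r.1 (loopPar i1), r.2))
  | _, _ => none

/-- Trace semantics `Accept` : the least set containing `ε` when `exp_ε(i)` and
`act·ς'` whenever `χ(i,p) = (i',act)` for some `p ∈ front(i)` and `ς' ∈ Accept(i')`. -/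
inductive Accept : Interaction n M → List (MAction n M) → Prop
  | nil {i : Interaction n M} : expEps i = true → Accept i []
  | cons {i i' : Interaction n M} {a : MAction n M} {ς : List (MAction n M)} {p : List Bool} :
      p ∈ front i → exec i p = some (i', a) → Accept i' ς → Accept i (a :: ς)

end Interaction

open Interaction

/-- projection of a global trace onto a multi-trace. -/
def proj {n : ℕ} {M : Type} : List (MAction n M) → Fin n → List (MAction n M)
  | [], _ => []
  | a :: ς, j => if a.lf = j then a :: proj ς j else proj ς j

/-- A function `Fin n → List (MAction n M)` is a legitimate multi-trace when
each component only holds actions of its own lifeline. -/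
def IsMult {n : ℕ} {M : Type} (μ : Fin n → List (MAction n M)) : Prop :=
  ∀ j : Fin n, ∀ a ∈ μ j, a.lf = j

/-- total number of actions in a multi-trace. -/
def mtLen {n : ℕ} {M : Type} (μ : Fin n → List (MAction n M)) : ℕ :=
  ∑ j : Fin n, (μ j).length

/-- Vertices of the analysis graph. -/
inductive Vertex (n : ℕ) (M : Type) : Type where
  | cov : Vertex n M
  | uncov : Vertex n M
  | node : Interaction n M → (Fin n → List (MAction n M)) → Vertex n M

/-- The analysis relation `⇝` given by rules R1-R4. -/
inductive AnaStep {n : ℕ} {M : Type} : Vertex n M → Vertex n M → Prop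
  | r1 {i : Interaction n M} {μ} :
      (∀ j, μ j = []) → expEps i = true → AnaStep (.node i μ) .cov
  | r2 {i : Interaction n M} {μ} :
      (∀ j, μ j = []) → expEps i = false → AnaStep (.node i μ) .uncov
  | r3 {i i' : Interaction n M} {a : MAction n M} {p : List Bool} {μ} {k : Fin n} {σ} :
      p ∈ front i → exec i p = some (i', a) → μ k = a :: σ →
      AnaStep (.node i μ) (.node i' (Function.update μ k σ))
  | r4 {i : Interaction n M} {μ} :
      (¬ ∀ j, μ j = []) →
      (∀ (j : Fin n) (a : MAction n M) σ, μ j = a :: σ →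
        ∀ p ∈ front i, subAt i p ≠ some (.act a)) →
      AnaStep (.node i μ) .uncov

/-- `ω(i,μ) = Pass` : there is a path `(i,μ) ⇝* Cov`. -/
def OmegaPass {n : ℕ} {M : Type} (i : Interaction n M) (μ : Fin n → List (MAction n M)) : Prop :=
  Relation.ReflTransGen AnaStep (Vertex.node i μ) Vertex.cov


namespace Interaction
variable {n : ℕ} {M : Type}

lemma avoids_of_expEps {i : Interaction n M} (l : Fin n) (h : expEps i = true) :
    avoids i l = true := by
  induction i with
  | empty => rfl
  | act a => simp [expEps] at h
  | strict i1 i2 ih1 ih2 =>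
      simp [expEps] at h; simp [avoids, ih1 h.1, ih2 h.2]
  | seq i1 i2 ih1 ih2 =>
      simp [expEps] at h; simp [avoids, ih1 h.1, ih2 h.2]
  | par i1 i2 ih1 ih2 =>
      simp [expEps] at h; simp [avoids, ih1 h.1, ih2 h.2]
  | alt i1 i2 ih1 ih2 =>
      simp [expEps] at h
      rcases h with h | h
      · simp [avoids, ih1 h]
      · simp [avoids, ih2 h]
  | loopStrict i1 ih => rfl
  | loopSeq i1 ih => rfl
  | loopPar i1 ih => rfl

lemma expEps_prune {i : Interaction n M} (l : Fin n) (h : avoids i l = true) :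
    expEps (prune i l) = expEps i := by
  induction i with
  | empty => rfl
  | act a => rfl
  | strict i1 i2 ih1 ih2 =>
      simp [avoids] at h; simp [prune, expEps, ih1 h.1, ih2 h.2]
  | seq i1 i2 ih1 ih2 =>
      simp [avoids] at h; simp [prune, expEps, ih1 h.1, ih2 h.2]
  | par i1 i2 ih1 ih2 =>
      simp [avoids] at h; simp [prune, expEps, ih1 h.1, ih2 h.2]
  | alt i1 i2 ih1 ih2 =>
      by_cases h1 : avoids i1 l = true <;> by_cases h2 : avoids i2 l = true
      · simp [prune, h1, h2, expEps, ih1 h1, ih2 h2]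
      · have e2 : expEps i2 = false := by
          cases he : expEps i2
          · rfl
          · exact absurd (avoids_of_expEps l he) h2
        simp [prune, h1, h2, expEps, ih1 h1, e2]
      · have e1 : expEps i1 = false := by
          cases he : expEps i1
          · rfl
          · exact absurd (avoids_of_expEps l he) h1
        simp [prune, h1, h2, expEps, ih2 h2, e1]
      · simp [avoids] at h; tauto
  | loopStrict i1 ih => by_cases h1 : avoids i1 l = true <;> simp [prune, h1, expEps]
  | loopSeq i1 ih => by_cases h1 : avoids i1 l = true <;> simp [prune, h1, expEps]
  | loopPar i1 ih => by_cases h1 : avoids i1 l = true <;> simp [prune, h1, expEps]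

lemma avoids_of_avoids_prune {i : Interaction n M} {l l' : Fin n}
    (h : avoids i l = true) (h' : avoids (prune i l) l' = true) : avoids i l' = true := by
  induction i with
  | empty => rfl
  | act a => simpa [prune] using h'
  | strict i1 i2 ih1 ih2 =>
      simp [avoids] at h ⊢; simp [prune, avoids] at h'
      exact ⟨ih1 h.1 h'.1, ih2 h.2 h'.2⟩
  | seq i1 i2 ih1 ih2 =>
      simp [avoids] at h ⊢; simp [prune, avoids] at h'
      exact ⟨ih1 h.1 h'.1, ih2 h.2 h'.2⟩
  | par i1 i2 ih1 ih2 =>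
      simp [avoids] at h ⊢; simp [prune, avoids] at h'
      exact ⟨ih1 h.1 h'.1, ih2 h.2 h'.2⟩
  | alt i1 i2 ih1 ih2 =>
      by_cases h1 : avoids i1 l = true <;> by_cases h2 : avoids i2 l = true
      · simp [prune, h1, h2, avoids] at h'
        rcases h' with h' | h'
        · simp [avoids, ih1 h1 h']
        · simp [avoids, ih2 h2 h']
      · simp [prune, h1, h2] at h'; simp [avoids, ih1 h1 h']
      · simp [prune, h1, h2] at h'; simp [avoids, ih2 h2 h']
      · simp [avoids] at h; tauto
  | loopStrict i1 ih => rfl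
  | loopSeq i1 ih => rfl
  | loopPar i1 ih => rfl

end Interaction
namespace Interaction
variable {n : ℕ} {M : Type}

/-- contrapositive of avoids_of_avoids_prune -/
lemma avoids_prune_false {i : Interaction n M} {l l' : Fin n}
    (h : avoids i l = true) (h' : avoids i l' = false) : avoids (prune i l) l' = false := by
  cases hh : avoids (prune i l) l'
  · rfl
  · exact absurd (avoids_of_avoids_prune h hh) (by simp [h'])

lemma avoids_prune_symm {i : Interaction n M} {l l' : Fin n}
    (h : avoids i l = true) (h' : avoids i l' = true) :
    avoids (prune i l) l' = avoids (prune i l') l := by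
  induction i with
  | empty => rfl
  | act a => simp [prune, h, h']
  | strict i1 i2 ih1 ih2 =>
      simp [avoids] at h h'
      simp [prune, avoids, ih1 h.1 h'.1, ih2 h.2 h'.2]
  | seq i1 i2 ih1 ih2 =>
      simp [avoids] at h h'
      simp [prune, avoids, ih1 h.1 h'.1, ih2 h.2 h'.2]
  | par i1 i2 ih1 ih2 =>
      simp [avoids] at h h'
      simp [prune, avoids, ih1 h.1 h'.1, ih2 h.2 h'.2]
  | alt i1 i2 ih1 ih2 =>
      simp only [avoids] at h h'
      by_cases h1 : avoids i1 l = true <;> by_cases h2 : avoids i2 l = true <;>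
        by_cases h1' : avoids i1 l' = true <;> by_cases h2' : avoids i2 l' = true
      · simp [prune, h1, h2, h1', h2', avoids, ih1 h1 h1', ih2 h2 h2']
      · simp [prune, h1, h2, h1', h2', avoids, ih1 h1 h1',
          avoids_prune_false h2 (by simpa using h2')]
      · simp [prune, h1, h2, h1', h2', avoids, ih2 h2 h2',
          avoids_prune_false h1 (by simpa using h1')]
      · simp [h1', h2'] at h'
      · simp [prune, h1, h2, h1', h2', avoids, ih1 h1 h1',
          avoids_prune_false h2' (by simpa using h2)]
      · simp [prune, h1, h2, h1', h2', avoids, ih1 h1 h1']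
      · simp [prune, h1, h2, h1', h2', avoids,
          avoids_prune_false h1 (by simpa using h1'),
          avoids_prune_false h2' (by simpa using h2)]
      · simp [h1', h2'] at h'
      · simp [prune, h1, h2, h1', h2', avoids, ih2 h2 h2',
          avoids_prune_false h1' (by simpa using h1)]
      · simp [prune, h1, h2, h1', h2', avoids,
          avoids_prune_false h2 (by simpa using h2'),
          avoids_prune_false h1' (by simpa using h1)]
      · simp [prune, h1, h2, h1', h2', avoids, ih2 h2 h2']
      · simp [h1', h2'] at h'
      all_goals simp [h1, h2] at h
  | loopStrict i1 ih =>
      by_cases h1 : avoids i1 l = true <;> by_cases h1' : avoids i1 l' = true <;>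
        simp [prune, h1, h1', avoids]
  | loopSeq i1 ih =>
      by_cases h1 : avoids i1 l = true <;> by_cases h1' : avoids i1 l' = true <;>
        simp [prune, h1, h1', avoids]
  | loopPar i1 ih =>
      by_cases h1 : avoids i1 l = true <;> by_cases h1' : avoids i1 l' = true <;>
        simp [prune, h1, h1', avoids]

end Interaction
namespace Interaction
variable {n : ℕ} {M : Type}

lemma prune_comm {i : Interaction n M} {l l' : Fin n}
    (h : avoids i l = true) (h' : avoids i l' = true)
    (hp : avoids (prune i l) l' = true) :
    prune (prune i l) l' = prune (prune i l') l := by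
  induction i with
  | empty => rfl
  | act a => rfl
  | strict i1 i2 ih1 ih2 =>
      simp [avoids] at h h'
      simp [prune, avoids] at hp
      simp [prune, ih1 h.1 h'.1 hp.1, ih2 h.2 h'.2 hp.2]
  | seq i1 i2 ih1 ih2 =>
      simp [avoids] at h h'
      simp [prune, avoids] at hp
      simp [prune, ih1 h.1 h'.1 hp.1, ih2 h.2 h'.2 hp.2]
  | par i1 i2 ih1 ih2 =>
      simp [avoids] at h h'
      simp [prune, avoids] at hp
      simp [prune, ih1 h.1 h'.1 hp.1, ih2 h.2 h'.2 hp.2]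
  | alt i1 i2 ih1 ih2 =>
      simp only [avoids] at h h'
      by_cases h1 : avoids i1 l = true <;> by_cases h2 : avoids i2 l = true <;>
        by_cases h1' : avoids i1 l' = true <;> by_cases h2' : avoids i2 l' = true
      -- TTTT
      · have e1 := avoids_prune_symm h1 h1'
        have e2 := avoids_prune_symm h2 h2'
        simp [prune, h1, h2, h1', h2', avoids] at hp ⊢
        by_cases A1 : avoids (prune i1 l) l' = true <;>
          by_cases A2 : avoids (prune i2 l) l' = true
        · simp [A1, A2, ← e1, ← e2, ih1 h1 h1' A1, ih2 h2 h2' A2]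
        · simp [A1, A2, ← e1, ← e2, ih1 h1 h1' A1]
        · simp [A1, A2, ← e1, ← e2, ih2 h2 h2' A2]
        · simp [A1, A2] at hp
      -- TTTF
      · have f2 : avoids (prune i2 l) l' = false :=
          avoids_prune_false h2 (by simpa using h2')
        simp [prune, h1, h2, h1', h2', avoids, f2] at hp ⊢
        simp [hp, ih1 h1 h1' hp]
      -- TTFT
      · have f1 : avoids (prune i1 l) l' = false :=
          avoids_prune_false h1 (by simpa using h1')
        simp [prune, h1, h2, h1', h2', avoids, f1] at hp ⊢
        simp [hp, ih2 h2 h2' hp]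
      · simp [h1', h2'] at h'
      -- TFTT
      · have f2 : avoids (prune i2 l') l = false :=
          avoids_prune_false h2' (by simpa using h2)
        simp [prune, h1, h2, h1', h2'] at hp ⊢
        have e1 := avoids_prune_symm h1 h1'
        simp [avoids, f2, ← e1, hp, ih1 h1 h1' hp]
      -- TFTF
      · simp [prune, h1, h2, h1', h2'] at hp ⊢
        exact ih1 h1 h1' hp
      -- TFFT
      · have f1 : avoids (prune i1 l) l' = false :=
          avoids_prune_false h1 (by simpa using h1')
        simp [prune, h1, h2, h1', h2', f1] at hp
      · simp [h1', h2'] at h'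
      -- FTTT
      · have f1 : avoids (prune i1 l') l = false :=
          avoids_prune_false h1' (by simpa using h1)
        simp [prune, h1, h2, h1', h2'] at hp ⊢
        have e2 := avoids_prune_symm h2 h2'
        simp [avoids, f1, ← e2, hp, ih2 h2 h2' hp]
      -- FTTF
      · have f2 : avoids (prune i2 l) l' = false :=
          avoids_prune_false h2 (by simpa using h2')
        simp [prune, h1, h2, h1', h2', f2] at hp
      -- FTFT
      · simp [prune, h1, h2, h1', h2'] at hp ⊢
        exact ih2 h2 h2' hp
      · simp [h1', h2'] at h'
      all_goals simp [h1, h2] at h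
  | loopStrict i1 ih =>
      by_cases h1 : avoids i1 l = true <;> by_cases h1' : avoids i1 l' = true
      · have e1 := avoids_prune_symm h1 h1'
        by_cases A1 : avoids (prune i1 l) l' = true
        · simp [prune, h1, h1', A1, ← e1, ih h1 h1' A1]
        · simp [prune, h1, h1', A1, ← e1]
      · have f1 : avoids (prune i1 l) l' = false :=
          avoids_prune_false h1 (by simpa using h1')
        simp [prune, h1, h1', f1]
      · have f1 : avoids (prune i1 l') l = false :=
          avoids_prune_false h1' (by simpa using h1)
        simp [prune, h1, h1', f1]
      · simp [prune, h1, h1']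
  | loopSeq i1 ih =>
      by_cases h1 : avoids i1 l = true <;> by_cases h1' : avoids i1 l' = true
      · have e1 := avoids_prune_symm h1 h1'
        by_cases A1 : avoids (prune i1 l) l' = true
        · simp [prune, h1, h1', A1, ← e1, ih h1 h1' A1]
        · simp [prune, h1, h1', A1, ← e1]
      · have f1 : avoids (prune i1 l) l' = false :=
          avoids_prune_false h1 (by simpa using h1')
        simp [prune, h1, h1', f1]
      · have f1 : avoids (prune i1 l') l = false :=
          avoids_prune_false h1' (by simpa using h1)
        simp [prune, h1, h1', f1]
      · simp [prune, h1, h1']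
  | loopPar i1 ih =>
      by_cases h1 : avoids i1 l = true <;> by_cases h1' : avoids i1 l' = true
      · have e1 := avoids_prune_symm h1 h1'
        by_cases A1 : avoids (prune i1 l) l' = true
        · simp [prune, h1, h1', A1, ← e1, ih h1 h1' A1]
        · simp [prune, h1, h1', A1, ← e1]
      · have f1 : avoids (prune i1 l) l' = false :=
          avoids_prune_false h1 (by simpa using h1')
        simp [prune, h1, h1', f1]
      · have f1 : avoids (prune i1 l') l = false :=
          avoids_prune_false h1' (by simpa using h1)
        simp [prune, h1, h1', f1]
      · simp [prune, h1, h1']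

lemma subAt_of_exec {i : Interaction n M} {p : List Bool} {i' : Interaction n M}
    {a : MAction n M} (h : exec i p = some (i', a)) : subAt i p = some (.act a) := by
  induction i generalizing p i' with
  | empty => simp [exec] at h
  | act b =>
      cases p with
      | nil => simp [exec] at h; simp [subAt, h.2]
      | cons hd tl => simp [exec] at h
  | strict i1 i2 ih1 ih2 =>
      cases p with
      | nil => simp [exec] at h
      | cons hd tl =>
          cases hd
          · simp [exec] at h
            obtain ⟨j, hj, he⟩ := h
            simpa [subAt] using ih1 hj
          · simpa [subAt] using ih2 h
  | seq i1 i2 ih1 ih2 =>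
      cases p with
      | nil => simp [exec] at h
      | cons hd tl =>
          cases hd
          · simp [exec] at h
            obtain ⟨j, hj, he⟩ := h
            simpa [subAt] using ih1 hj
          · simp [exec] at h
            obtain ⟨j, hj, he⟩ := h
            simpa [subAt] using ih2 hj
  | alt i1 i2 ih1 ih2 =>
      cases p with
      | nil => simp [exec] at h
      | cons hd tl =>
          cases hd
          · simpa [subAt] using ih1 h
          · simpa [subAt] using ih2 h
  | par i1 i2 ih1 ih2 =>
      cases p with
      | nil => simp [exec] at h
      | cons hd tl =>
          cases hd
          · simp [exec] at h
            obtain ⟨j, hj, he⟩ := h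
            simpa [subAt] using ih1 hj
          · simp [exec] at h
            obtain ⟨j, hj, he⟩ := h
            simpa [subAt] using ih2 hj
  | loopStrict i1 ih =>
      cases p with
      | nil => simp [exec] at h
      | cons hd tl =>
          cases hd
          · simp [exec] at h
            obtain ⟨j, hj, he⟩ := h
            simpa [subAt] using ih hj
          · simp [exec] at h
  | loopSeq i1 ih =>
      cases p with
      | nil => simp [exec] at h
      | cons hd tl =>
          cases hd
          · simp [exec] at h
            obtain ⟨j, hj, he⟩ := h
            simpa [subAt] using ih hj
          · simp [exec] at h
  | loopPar i1 ih =>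
      cases p with
      | nil => simp [exec] at h
      | cons hd tl =>
          cases hd
          · simp [exec] at h
            obtain ⟨j, hj, he⟩ := h
            simpa [subAt] using ih hj
          · simp [exec] at h

end Interaction
namespace Interaction
variable {n : ℕ} {M : Type}

@[simp] lemma mem_front_strict_false {i1 i2 : Interaction n M} {q : List Bool} :
    (false :: q) ∈ front (strict i1 i2) ↔ q ∈ front i1 := by
  by_cases hE : expEps i1 <;> simp [front, hE]

@[simp] lemma mem_front_strict_true {i1 i2 : Interaction n M} {q : List Bool} :
    (true :: q) ∈ front (strict i1 i2) ↔ (expEps i1 = true ∧ q ∈ front i2) := by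
  by_cases hE : expEps i1 <;> simp [front, hE]

@[simp] lemma mem_front_seq_false {i1 i2 : Interaction n M} {q : List Bool} :
    (false :: q) ∈ front (seq i1 i2) ↔ q ∈ front i1 := by
  simp [front]

@[simp] lemma mem_front_seq_true {i1 i2 : Interaction n M} {q : List Bool} :
    (true :: q) ∈ front (seq i1 i2) ↔ (q ∈ front i2 ∧
      (match subAt i2 q with
       | some (act a) => avoids i1 a.lf
       | _ => false) = true) := by
  simp [front, Finset.mem_filter]

@[simp] lemma mem_front_alt_false {i1 i2 : Interaction n M} {q : List Bool} :
    (false :: q) ∈ front (alt i1 i2) ↔ q ∈ front i1 := by simp [front]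

@[simp] lemma mem_front_alt_true {i1 i2 : Interaction n M} {q : List Bool} :
    (true :: q) ∈ front (alt i1 i2) ↔ q ∈ front i2 := by simp [front]

@[simp] lemma mem_front_par_false {i1 i2 : Interaction n M} {q : List Bool} :
    (false :: q) ∈ front (par i1 i2) ↔ q ∈ front i1 := by simp [front]

@[simp] lemma mem_front_par_true {i1 i2 : Interaction n M} {q : List Bool} :
    (true :: q) ∈ front (par i1 i2) ↔ q ∈ front i2 := by simp [front]

@[simp] lemma mem_front_loopStrict {i1 : Interaction n M} {q : List Bool} :
    (false :: q) ∈ front (loopStrict i1) ↔ q ∈ front i1 := by simp [front]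

@[simp] lemma mem_front_loopSeq {i1 : Interaction n M} {q : List Bool} :
    (false :: q) ∈ front (loopSeq i1) ↔ q ∈ front i1 := by simp [front]

@[simp] lemma mem_front_loopPar {i1 : Interaction n M} {q : List Bool} :
    (false :: q) ∈ front (loopPar i1) ↔ q ∈ front i1 := by simp [front]

end Interaction
namespace Interaction
variable {n : ℕ} {M : Type}

lemma avoids_of_step {l : Fin n} {i : Interaction n M} :
    ∀ {p : List Bool} {i' : Interaction n M} {a : MAction n M},
    p ∈ front i → exec i p = some (i', a) → a.lf ≠ l →
    avoids i' l = true → avoids i l = true := by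
  induction i with
  | empty => intro p i' a hf; simp [front] at hf
  | act b =>
      intro p i' a hf he ha h'
      cases p with
      | nil => simp [exec] at he; rw [← he.2] at ha; simp [avoids, ha]
      | cons hd tl => simp [exec] at he
  | strict i1 i2 ih1 ih2 =>
      intro p i' a hf he ha h'
      cases p with
      | nil => simp [exec] at he
      | cons hd tl =>
          cases hd
          · simp [exec] at he
            obtain ⟨j, hj, hee⟩ := he
            subst hee
            simp [avoids] at h'
            simp at hf
            simp [avoids, ih1 hf hj ha h'.1, h'.2]
          · simp [exec] at he
            simp at hf
            simp [avoids, avoids_of_expEps l hf.1, ih2 hf.2 he ha h']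
  | seq i1 i2 ih1 ih2 =>
      intro p i' a hf he ha h'
      cases p with
      | nil => simp [exec] at he
      | cons hd tl =>
          cases hd
          · simp [exec] at he
            obtain ⟨j, hj, hee⟩ := he
            subst hee
            simp [avoids] at h'
            simp at hf
            simp [avoids, ih1 hf hj ha h'.1, h'.2]
          · simp [exec] at he
            obtain ⟨j, hj, hee⟩ := he
            subst hee
            simp [avoids] at h'
            simp at hf
            have hsub := subAt_of_exec hj
            rw [hsub] at hf
            have h1 : avoids i1 a.lf = true := hf.2
            simp [avoids, avoids_of_avoids_prune h1 h'.1, ih2 hf.1 hj ha h'.2]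
  | alt i1 i2 ih1 ih2 =>
      intro p i' a hf he ha h'
      cases p with
      | nil => simp [exec] at he
      | cons hd tl =>
          cases hd
          · simp [exec] at he
            simp at hf
            simp [avoids, ih1 hf he ha h']
          · simp [exec] at he
            simp at hf
            simp [avoids, ih2 hf he ha h']
  | par i1 i2 ih1 ih2 =>
      intro p i' a hf he ha h'
      cases p with
      | nil => simp [exec] at he
      | cons hd tl =>
          cases hd
          · simp [exec] at he
            obtain ⟨j, hj, hee⟩ := he
            subst hee
            simp [avoids] at h'
            simp at hf
            simp [avoids, ih1 hf hj ha h'.1, h'.2]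
          · simp [exec] at he
            obtain ⟨j, hj, hee⟩ := he
            subst hee
            simp [avoids] at h'
            simp at hf
            simp [avoids, ih2 hf hj ha h'.2, h'.1]
  | loopStrict i1 ih => intro _ _ _ _ _ _ _; rfl
  | loopSeq i1 ih => intro _ _ _ _ _ _ _; rfl
  | loopPar i1 ih => intro _ _ _ _ _ _ _; rfl

end Interaction
namespace Interaction
variable {n : ℕ} {M : Type}

lemma exec_prune_fwd {l : Fin n} {i : Interaction n M} :
    ∀ {p : List Bool} {i'' : Interaction n M} {a : MAction n M},
    avoids i l = true → p ∈ front i → exec i p = some (i'', a) →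
    a.lf ≠ l → avoids i'' l = true →
    ∃ p', p' ∈ front (prune i l) ∧ exec (prune i l) p' = some (prune i'' l, a) := by
  induction i with
  | empty => intro p _ _ _ hf; simp [front] at hf
  | act b =>
      intro p i'' a hav hf he ha h'
      cases p with
      | nil =>
          simp [exec] at he
          obtain ⟨h1, h2⟩ := he
          subst h1; subst h2
          exact ⟨[], by simp [prune, front], by simp [prune, exec]⟩
      | cons hd tl => simp [exec] at he
  | strict i1 i2 ih1 ih2 =>
      intro p i'' a hav hf he ha h'
      simp [avoids] at hav
      cases p with
      | nil => simp [exec] at he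
      | cons hd tl =>
          cases hd
          · simp [exec] at he
            obtain ⟨j, hj, hee⟩ := he
            subst hee
            simp [avoids] at h'
            simp at hf
            obtain ⟨q, hq, hqe⟩ := ih1 hav.1 hf hj ha h'.1
            exact ⟨false :: q, by simp [prune, hq],
              by simp [prune, exec, hqe]⟩
          · simp [exec] at he
            simp at hf
            obtain ⟨q, hq, hqe⟩ := ih2 hav.2 hf.2 he ha h'
            exact ⟨true :: q,
              by simp [prune, hq, expEps_prune l hav.1, hf.1],
              by simp [prune, exec, hqe]⟩
  | seq i1 i2 ih1 ih2 =>
      intro p i'' a hav hf he ha h'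
      simp [avoids] at hav
      cases p with
      | nil => simp [exec] at he
      | cons hd tl =>
          cases hd
          · simp [exec] at he
            obtain ⟨j, hj, hee⟩ := he
            subst hee
            simp [avoids] at h'
            simp at hf
            obtain ⟨q, hq, hqe⟩ := ih1 hav.1 hf hj ha h'.1
            exact ⟨false :: q, by simp [prune, hq],
              by simp [prune, exec, hqe]⟩
          · simp [exec] at he
            obtain ⟨j, hj, hee⟩ := he
            subst hee
            simp [avoids] at h'
            simp at hf
            rw [subAt_of_exec hj] at hf
            have h1a : avoids i1 a.lf = true := hf.2
            obtain ⟨q, hq, hqe⟩ := ih2 hav.2 hf.1 hj ha h'.2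
            have hPa : avoids (prune i1 l) a.lf = true := by
              rw [avoids_prune_symm hav.1 h1a]; exact h'.1
            refine ⟨true :: q, ?_, ?_⟩
            · simp [prune, hq]
              rw [subAt_of_exec hqe]
              exact hPa
            · simp [prune, exec, hqe, prune_comm hav.1 h1a hPa]
  | alt i1 i2 ih1 ih2 =>
      intro p i'' a hav hf he ha h'
      simp [avoids] at hav
      cases p with
      | nil => simp [exec] at he
      | cons hd tl =>
          cases hd
          · simp [exec] at he
            simp at hf
            have h1 : avoids i1 l = true := avoids_of_step hf he ha h'
            obtain ⟨q, hq, hqe⟩ := ih1 h1 hf he ha h'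
            by_cases h2 : avoids i2 l = true
            · exact ⟨false :: q, by simp [prune, h1, h2, hq],
                by simp [prune, h1, h2, exec, hqe]⟩
            · exact ⟨q, by simp [prune, h1, h2, hq],
                by simp [prune, h1, h2, hqe]⟩
          · simp [exec] at he
            simp at hf
            have h2 : avoids i2 l = true := avoids_of_step hf he ha h'
            obtain ⟨q, hq, hqe⟩ := ih2 h2 hf he ha h'
            by_cases h1 : avoids i1 l = true
            · exact ⟨true :: q, by simp [prune, h1, h2, hq],
                by simp [prune, h1, h2, exec, hqe]⟩
            · exact ⟨q, by simp [prune, h1, h2, hq],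
                by simp [prune, h1, h2, hqe]⟩
  | par i1 i2 ih1 ih2 =>
      intro p i'' a hav hf he ha h'
      simp [avoids] at hav
      cases p with
      | nil => simp [exec] at he
      | cons hd tl =>
          cases hd
          · simp [exec] at he
            obtain ⟨j, hj, hee⟩ := he
            subst hee
            simp [avoids] at h'
            simp at hf
            obtain ⟨q, hq, hqe⟩ := ih1 hav.1 hf hj ha h'.1
            exact ⟨false :: q, by simp [prune, hq],
              by simp [prune, exec, hqe]⟩
          · simp [exec] at he
            obtain ⟨j, hj, hee⟩ := he
            subst hee
            simp [avoids] at h'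
            simp at hf
            obtain ⟨q, hq, hqe⟩ := ih2 hav.2 hf hj ha h'.2
            exact ⟨true :: q, by simp [prune, hq],
              by simp [prune, exec, hqe]⟩
  | loopStrict i1 ih =>
      intro p i'' a hav hf he ha h'
      cases p with
      | nil => simp [exec] at he
      | cons hd tl =>
          cases hd
          · simp [exec] at he
            obtain ⟨j, hj, hee⟩ := he
            subst hee
            simp [avoids] at h'
            simp at hf
            have h1 : avoids i1 l = true := avoids_of_step hf hj ha h'
            obtain ⟨q, hq, hqe⟩ := ih h1 hf hj ha h'
            exact ⟨false :: q, by simp [prune, h1, hq],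
              by simp [prune, h1, exec, hqe]⟩
          · simp [exec] at he
  | loopSeq i1 ih =>
      intro p i'' a hav hf he ha h'
      cases p with
      | nil => simp [exec] at he
      | cons hd tl =>
          cases hd
          · simp [exec] at he
            obtain ⟨j, hj, hee⟩ := he
            subst hee
            simp [avoids] at h'
            simp at hf
            have h1 : avoids i1 l = true := avoids_of_step hf hj ha h'
            obtain ⟨q, hq, hqe⟩ := ih h1 hf hj ha h'
            exact ⟨false :: q, by simp [prune, h1, hq],
              by simp [prune, h1, exec, hqe]⟩
          · simp [exec] at he
  | loopPar i1 ih =>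
      intro p i'' a hav hf he ha h'
      cases p with
      | nil => simp [exec] at he
      | cons hd tl =>
          cases hd
          · simp [exec] at he
            obtain ⟨j, hj, hee⟩ := he
            subst hee
            simp [avoids] at h'
            simp at hf
            have h1 : avoids i1 l = true := avoids_of_step hf hj ha h'
            obtain ⟨q, hq, hqe⟩ := ih h1 hf hj ha h'
            exact ⟨false :: q, by simp [prune, h1, hq],
              by simp [prune, h1, exec, hqe]⟩
          · simp [exec] at he

end Interaction
namespace Interaction
variable {n : ℕ} {M : Type}

lemma exec_prune_rev {l : Fin n} {i : Interaction n M} :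
    ∀ {p : List Bool} {i' : Interaction n M} {a : MAction n M},
    avoids i l = true → p ∈ front (prune i l) → exec (prune i l) p = some (i', a) →
    ∃ p' i'', p' ∈ front i ∧ exec i p' = some (i'', a) ∧ a.lf ≠ l ∧
      avoids i'' l = true ∧ i' = prune i'' l := by
  induction i with
  | empty => intro p _ _ _ hf; simp [prune, front] at hf
  | act b =>
      intro p i' a hav hf he
      cases p with
      | nil =>
          simp [prune, exec] at he
          obtain ⟨h1, h2⟩ := he
          subst h1; subst h2
          simp [avoids] at hav
          exact ⟨[], empty, by simp [front], by simp [exec], hav, rfl, rfl⟩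
      | cons hd tl => simp [prune, exec] at he
  | strict i1 i2 ih1 ih2 =>
      intro p i' a hav hf he
      simp [avoids] at hav
      simp only [prune] at hf he
      cases p with
      | nil => simp [exec] at he
      | cons hd tl =>
          cases hd
          · simp [exec] at he
            obtain ⟨j, hj, hee⟩ := he
            subst hee
            simp at hf
            obtain ⟨q, j'', hq, hqe, ha, hjav, rfl⟩ := ih1 hav.1 hf hj
            exact ⟨false :: q, strict j'' i2, by simp [hq],
              by simp [exec, hqe], ha, by simp [avoids, hjav, hav.2],
              by simp [prune]⟩
          · simp [exec] at he
            simp at hf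
            obtain ⟨q, j'', hq, hqe, ha, hjav, rfl⟩ := ih2 hav.2 hf.2 he
            refine ⟨true :: q, j'', ?_, by simp [exec, hqe], ha, hjav, rfl⟩
            simp [hq]
            rw [← expEps_prune l hav.1]; exact hf.1
  | seq i1 i2 ih1 ih2 =>
      intro p i' a hav hf he
      simp [avoids] at hav
      simp only [prune] at hf he
      cases p with
      | nil => simp [exec] at he
      | cons hd tl =>
          cases hd
          · simp [exec] at he
            obtain ⟨j, hj, hee⟩ := he
            subst hee
            simp at hf
            obtain ⟨q, j'', hq, hqe, ha, hjav, rfl⟩ := ih1 hav.1 hf hj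
            exact ⟨false :: q, seq j'' i2, by simp [hq],
              by simp [exec, hqe], ha, by simp [avoids, hjav, hav.2],
              by simp [prune]⟩
          · simp [exec] at he
            obtain ⟨j, hj, hee⟩ := he
            subst hee
            simp at hf
            rw [subAt_of_exec hj] at hf
            have hPa : avoids (prune i1 l) a.lf = true := hf.2
            have h1a : avoids i1 a.lf = true := avoids_of_avoids_prune hav.1 hPa
            obtain ⟨q, j'', hq, hqe, ha, hjav, rfl⟩ := ih2 hav.2 hf.1 hj
            refine ⟨true :: q, seq (prune i1 a.lf) j'', ?_, by simp [exec, hqe], ha, ?_, ?_⟩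
            · simp [hq]
              rw [subAt_of_exec hqe]
              exact h1a
            · have : avoids (prune i1 a.lf) l = true := by
                rw [← avoids_prune_symm hav.1 h1a]; exact hPa
              simp [avoids, this, hjav]
            · simp [prune, prune_comm hav.1 h1a hPa]
  | alt i1 i2 ih1 ih2 =>
      intro p i' a hav hf he
      simp [avoids] at hav
      by_cases h1 : avoids i1 l = true <;> by_cases h2 : avoids i2 l = true
      · simp only [prune, h1, h2, if_true] at hf he
        cases p with
        | nil => simp [exec] at he
        | cons hd tl =>
            cases hd
            · simp [exec] at he
              simp at hf
              obtain ⟨q, j'', hq, hqe, ha, hjav, rfl⟩ := ih1 h1 hf he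
              exact ⟨false :: q, j'', by simp [hq], by simp [exec, hqe], ha, hjav, rfl⟩
            · simp [exec] at he
              simp at hf
              obtain ⟨q, j'', hq, hqe, ha, hjav, rfl⟩ := ih2 h2 hf he
              exact ⟨true :: q, j'', by simp [hq], by simp [exec, hqe], ha, hjav, rfl⟩
      · simp only [prune, h1, h2, if_true, if_false] at hf he
        obtain ⟨q, j'', hq, hqe, ha, hjav, rfl⟩ := ih1 h1 hf he
        exact ⟨false :: q, j'', by simp [hq], by simp [exec, hqe], ha, hjav, rfl⟩
      · simp only [prune, h1, h2, if_true, if_false] at hf he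
        obtain ⟨q, j'', hq, hqe, ha, hjav, rfl⟩ := ih2 h2 hf he
        exact ⟨true :: q, j'', by simp [hq], by simp [exec, hqe], ha, hjav, rfl⟩
      · simp [h1, h2] at hav
  | par i1 i2 ih1 ih2 =>
      intro p i' a hav hf he
      simp [avoids] at hav
      simp only [prune] at hf he
      cases p with
      | nil => simp [exec] at he
      | cons hd tl =>
          cases hd
          · simp [exec] at he
            obtain ⟨j, hj, hee⟩ := he
            subst hee
            simp at hf
            obtain ⟨q, j'', hq, hqe, ha, hjav, rfl⟩ := ih1 hav.1 hf hj
            exact ⟨false :: q, par j'' i2, by simp [hq],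
              by simp [exec, hqe], ha, by simp [avoids, hjav, hav.2],
              by simp [prune]⟩
          · simp [exec] at he
            obtain ⟨j, hj, hee⟩ := he
            subst hee
            simp at hf
            obtain ⟨q, j'', hq, hqe, ha, hjav, rfl⟩ := ih2 hav.2 hf hj
            exact ⟨true :: q, par i1 j'', by simp [hq],
              by simp [exec, hqe], ha, by simp [avoids, hjav, hav.1],
              by simp [prune]⟩
  | loopStrict i1 ih =>
      intro p i' a hav hf he
      by_cases h1 : avoids i1 l = true
      · simp only [prune, h1, if_true] at hf he
        cases p with
        | nil => simp [exec] at he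
        | cons hd tl =>
            cases hd
            · simp [exec] at he
              obtain ⟨j, hj, hee⟩ := he
              subst hee
              simp at hf
              obtain ⟨q, j'', hq, hqe, ha, hjav, rfl⟩ := ih h1 hf hj
              exact ⟨false :: q, strict j'' (loopStrict i1), by simp [hq],
                by simp [exec, hqe], ha, by simp [avoids, hjav],
                by simp [prune, h1]⟩
            · simp [exec] at he
      · simp [prune, h1, front] at hf
  | loopSeq i1 ih =>
      intro p i' a hav hf he
      by_cases h1 : avoids i1 l = true
      · simp only [prune, h1, if_true] at hf he
        cases p with
        | nil => simp [exec] at he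
        | cons hd tl =>
            cases hd
            · simp [exec] at he
              obtain ⟨j, hj, hee⟩ := he
              subst hee
              simp at hf
              obtain ⟨q, j'', hq, hqe, ha, hjav, rfl⟩ := ih h1 hf hj
              exact ⟨false :: q, seq j'' (loopSeq i1), by simp [hq],
                by simp [exec, hqe], ha, by simp [avoids, hjav],
                by simp [prune, h1]⟩
            · simp [exec] at he
      · simp [prune, h1, front] at hf
  | loopPar i1 ih =>
      intro p i' a hav hf he
      by_cases h1 : avoids i1 l = true
      · simp only [prune, h1, if_true] at hf he
        cases p with
        | nil => simp [exec] at he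
        | cons hd tl =>
            cases hd
            · simp [exec] at he
              obtain ⟨j, hj, hee⟩ := he
              subst hee
              simp at hf
              obtain ⟨q, j'', hq, hqe, ha, hjav, rfl⟩ := ih h1 hf hj
              exact ⟨false :: q, par j'' (loopPar i1), by simp [hq],
                by simp [exec, hqe], ha, by simp [avoids, hjav],
                by simp [prune, h1]⟩
            · simp [exec] at he
      · simp [prune, h1, front] at hf

end Interaction
namespace Interaction
variable {n : ℕ} {M : Type}

lemma avoids_of_accept {l : Fin n} {i : Interaction n M} {ς : List (MAction n M)}
    (h : Accept i ς) (hς : ∀ a ∈ ς, a.lf ≠ l) : avoids i l = true := by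
  induction h with
  | nil he => exact avoids_of_expEps l he
  | @cons i i' a ς p hf he _ ih =>
      exact avoids_of_step hf he (hς a (by simp))
        (ih (fun b hb => hς b (by simp [hb])))

lemma accept_prune_of_accept {l : Fin n} {i : Interaction n M} {ς : List (MAction n M)}
    (h : Accept i ς) (hς : ∀ a ∈ ς, a.lf ≠ l) (hav : avoids i l = true) :
    Accept (prune i l) ς := by
  induction h with
  | nil he => exact .nil (by rw [expEps_prune l hav]; exact he)
  | @cons i i' a ς p hf he hacc ih =>
      have ha : a.lf ≠ l := hς a (by simp)
      have hrest : ∀ b ∈ ς, b.lf ≠ l := fun b hb => hς b (by simp [hb])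
      have hav' : avoids i' l = true := avoids_of_accept hacc hrest
      obtain ⟨p', hp', he'⟩ := exec_prune_fwd hav hf he ha hav'
      exact .cons hp' he' (ih hrest hav')

lemma accept_of_accept_prune {l : Fin n} {k : Interaction n M} {ς : List (MAction n M)}
    (h : Accept k ς) :
    ∀ i : Interaction n M, avoids i l = true → k = prune i l →
      Accept i ς ∧ ∀ a ∈ ς, a.lf ≠ l := by
  induction h with
  | nil he =>
      intro i hav hk
      subst hk
      rw [expEps_prune l hav] at he
      exact ⟨.nil he, by simp⟩
  | @cons k k' a ς p hf he hacc ih =>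
      intro i hav hk
      subst hk
      obtain ⟨p', i'', hp', he', ha, hav'', rfl⟩ := exec_prune_rev hav hf he
      obtain ⟨hacc', hς'⟩ := ih i'' hav'' rfl
      refine ⟨.cons hp' he' hacc', ?_⟩
      intro b hb
      rcases List.mem_cons.mp hb with rfl | hb
      · exact ha
      · exact hς' b hb

end Interaction

/-- for `avoids(i,l) = ⊤`,
`Accept(prune(i,l)) = { ς ∈ Accept(i) | no action of ς occurs on lifeline l }`.
In particular `Accept(prune(i,l)) ⊆ Accept(i)`, its traces contain no action on `l`,
and it is the maximum such subset of `Accept(i)`. -/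
theorem prune_accept_characterization (n : ℕ) (M : Type)
    (i : Interaction n M) (l : Fin n) (hav : avoids i l = true) :
    ∀ ς : List (MAction n M),
      Accept (prune i l) ς ↔ (Accept i ς ∧ ∀ a ∈ ς, a.lf ≠ l) := by
  intro ς
  constructor
  · intro h
    exact accept_of_accept_prune h i hav rfl
  · rintro ⟨h, hς⟩
    exact accept_prune_of_accept h hς hav
end

section
/- For every interaction i ∈ Int and lifeline l ∈ L: avoids(i,l) = ⊤ if and only if there exists a trace ς ∈ Accept(i) containing no action occurring on lifeline l. -/
open Interaction

namespace Interaction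

variable {n : ℕ} {M : Type}

lemma expEps_avoids : ∀ (i : Interaction n M) (l : Fin n),
    expEps i = true → avoids i l = true := by
  intro i l h
  induction i with
  | empty => rfl
  | act a => simp [expEps] at h
  | strict i1 i2 ih1 ih2 =>
      simp only [expEps, Bool.and_eq_true] at h
      simp [avoids, ih1 h.1, ih2 h.2]
  | seq i1 i2 ih1 ih2 =>
      simp only [expEps, Bool.and_eq_true] at h
      simp [avoids, ih1 h.1, ih2 h.2]
  | par i1 i2 ih1 ih2 =>
      simp only [expEps, Bool.and_eq_true] at h
      simp [avoids, ih1 h.1, ih2 h.2]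
  | alt i1 i2 ih1 ih2 =>
      simp only [expEps, Bool.or_eq_true] at h
      rcases h with h | h
      · simp [avoids, ih1 h]
      · simp [avoids, ih2 h]
  | loopStrict i1 ih => rfl
  | loopSeq i1 ih => rfl
  | loopPar i1 ih => rfl

lemma prune_expEps : ∀ (i : Interaction n M) (l : Fin n),
    avoids i l = true → expEps i = true → expEps (prune i l) = true := by
  intro i l hav he
  induction i with
  | empty => rfl
  | act a => simp [expEps] at he
  | strict i1 i2 ih1 ih2 =>
      simp only [avoids, Bool.and_eq_true] at hav
      simp only [expEps, Bool.and_eq_true] at he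
      simp [prune, expEps, ih1 hav.1 he.1, ih2 hav.2 he.2]
  | seq i1 i2 ih1 ih2 =>
      simp only [avoids, Bool.and_eq_true] at hav
      simp only [expEps, Bool.and_eq_true] at he
      simp [prune, expEps, ih1 hav.1 he.1, ih2 hav.2 he.2]
  | par i1 i2 ih1 ih2 =>
      simp only [avoids, Bool.and_eq_true] at hav
      simp only [expEps, Bool.and_eq_true] at he
      simp [prune, expEps, ih1 hav.1 he.1, ih2 hav.2 he.2]
  | alt i1 i2 ih1 ih2 =>
      simp only [expEps, Bool.or_eq_true] at he
      by_cases h1 : avoids i1 l = true <;> by_cases h2 : avoids i2 l = true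
      · rcases he with he | he
        · simp [prune, h1, h2, expEps, ih1 h1 he]
        · simp [prune, h1, h2, expEps, ih2 h2 he]
      · rcases he with he | he
        · simp [prune, h1, h2, ih1 h1 he]
        · exact absurd (expEps_avoids i2 l he) h2
      · rcases he with he | he
        · exact absurd (expEps_avoids i1 l he) h1
        · simp [prune, h1, h2, ih2 h2 he]
      · simp only [avoids, Bool.or_eq_true] at hav; tauto
  | loopStrict i1 ih =>
      by_cases h1 : avoids i1 l = true <;> simp [prune, h1, expEps]
  | loopSeq i1 ih =>
      by_cases h1 : avoids i1 l = true <;> simp [prune, h1, expEps]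
  | loopPar i1 ih =>
      by_cases h1 : avoids i1 l = true <;> simp [prune, h1, expEps]

lemma exec_subAt : ∀ (i : Interaction n M) (p : List Bool) (i' : Interaction n M)
    (a : MAction n M), exec i p = some (i', a) → subAt i p = some (.act a) := by
  intro i
  induction i with
  | empty => intro p i' a h; cases p <;> simp [exec] at h
  | act b =>
      intro p i' a h
      cases p with
      | nil => simp [exec] at h; simp [subAt, h.2]
      | cons x q => cases x <;> simp [exec] at h
  | strict i1 i2 ih1 ih2 =>
      intro p i' a h
      cases p with
      | nil => simp [exec] at h
      | cons x q =>
        cases x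
        · simp only [exec, Option.map_eq_some_iff] at h
          obtain ⟨⟨j, b⟩, hj, heq⟩ := h
          obtain ⟨-, rfl⟩ := Prod.mk.injEq .. ▸ heq
          cases heq; exact ih1 q _ _ hj
        · simp only [exec] at h
          exact ih2 q _ _ h
  | seq i1 i2 ih1 ih2 =>
      intro p i' a h
      cases p with
      | nil => simp [exec] at h
      | cons x q =>
        cases x
        · simp only [exec, Option.map_eq_some_iff] at h
          obtain ⟨⟨j, b⟩, hj, heq⟩ := h
          cases heq; exact ih1 q _ _ hj
        · simp only [exec, Option.map_eq_some_iff] at h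
          obtain ⟨⟨j, b⟩, hj, heq⟩ := h
          cases heq; exact ih2 q _ _ hj
  | alt i1 i2 ih1 ih2 =>
      intro p i' a h
      cases p with
      | nil => simp [exec] at h
      | cons x q =>
        cases x
        · exact ih1 q _ _ h
        · exact ih2 q _ _ h
  | par i1 i2 ih1 ih2 =>
      intro p i' a h
      cases p with
      | nil => simp [exec] at h
      | cons x q =>
        cases x
        · simp only [exec, Option.map_eq_some_iff] at h
          obtain ⟨⟨j, b⟩, hj, heq⟩ := h
          cases heq; exact ih1 q _ _ hj
        · simp only [exec, Option.map_eq_some_iff] at h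
          obtain ⟨⟨j, b⟩, hj, heq⟩ := h
          cases heq; exact ih2 q _ _ hj
  | loopStrict i1 ih =>
      intro p i' a h
      cases p with
      | nil => simp [exec] at h
      | cons x q =>
        cases x
        · simp only [exec, Option.map_eq_some_iff] at h
          obtain ⟨⟨j, b⟩, hj, heq⟩ := h
          cases heq; exact ih q _ _ hj
        · simp [exec] at h
  | loopSeq i1 ih =>
      intro p i' a h
      cases p with
      | nil => simp [exec] at h
      | cons x q =>
        cases x
        · simp only [exec, Option.map_eq_some_iff] at h
          obtain ⟨⟨j, b⟩, hj, heq⟩ := h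
          cases heq; exact ih q _ _ hj
        · simp [exec] at h
  | loopPar i1 ih =>
      intro p i' a h
      cases p with
      | nil => simp [exec] at h
      | cons x q =>
        cases x
        · simp only [exec, Option.map_eq_some_iff] at h
          obtain ⟨⟨j, b⟩, hj, heq⟩ := h
          cases heq; exact ih q _ _ hj
        · simp [exec] at h

lemma accept_altL {i1 i2 : Interaction n M} {ς} (h : Accept i1 ς) :
    Accept (alt i1 i2) ς := by
  cases h with
  | nil he => exact Accept.nil (by simp [expEps, he])
  | @cons _ _ _ _ p hp hx ha =>
      exact Accept.cons (p := false :: p)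
        (Finset.mem_union_left _ (Finset.mem_image_of_mem _ hp))
        (by simpa [exec] using hx) ha

lemma accept_altR {i1 i2 : Interaction n M} {ς} (h : Accept i2 ς) :
    Accept (alt i1 i2) ς := by
  cases h with
  | nil he => exact Accept.nil (by simp [expEps, he])
  | @cons _ _ _ _ p hp hx ha =>
      exact Accept.cons (p := true :: p)
        (Finset.mem_union_right _ (Finset.mem_image_of_mem _ hp))
        (by simpa [exec] using hx) ha

lemma accept_strictR {i1 i2 : Interaction n M} {ς} (he1 : expEps i1 = true)
    (h : Accept i2 ς) : Accept (strict i1 i2) ς := by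
  cases h with
  | nil he => exact Accept.nil (by simp [expEps, he1, he])
  | @cons _ _ _ _ p hp hx ha =>
      exact Accept.cons (p := true :: p)
        (by simp only [front, he1, if_pos]
            exact Finset.mem_union_right _ (Finset.mem_image_of_mem _ hp))
        (by simpa [exec] using hx) ha

lemma accept_strict {i1 i2 : Interaction n M} {ς1 ς2} (h1 : Accept i1 ς1)
    (h2 : Accept i2 ς2) : Accept (strict i1 i2) (ς1 ++ ς2) := by
  induction h1 with
  | nil he => simpa using accept_strictR he h2
  | @cons _ _ _ _ p hp hx ha ih =>
      exact Accept.cons (p := false :: p)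
        (Finset.mem_union_left _ (Finset.mem_image_of_mem _ hp))
        (by simp [exec, hx]) ih

lemma accept_seqR {i2 : Interaction n M} {ς} (h : Accept i2 ς) :
    ∀ i1 : Interaction n M, expEps i1 = true → Accept (seq i1 i2) ς := by
  induction h with
  | nil he => exact fun i1 he1 => Accept.nil (by simp [expEps, he1, he])
  | @cons j j' a ς p hp hx ha ih =>
      intro i1 he1
      have hs := exec_subAt _ _ _ _ hx
      have hav : avoids i1 a.lf = true := expEps_avoids i1 a.lf he1
      refine Accept.cons (p := true :: p) ?_ ?_
        (ih (prune i1 a.lf) (prune_expEps i1 a.lf hav he1))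
      · refine Finset.mem_union_right _ (Finset.mem_image_of_mem _ ?_)
        refine Finset.mem_filter.mpr ⟨hp, ?_⟩
        rw [hs]; exact hav
      · simp [exec, hx]

lemma accept_seq {i1 i2 : Interaction n M} {ς1 ς2} (h1 : Accept i1 ς1)
    (h2 : Accept i2 ς2) : Accept (seq i1 i2) (ς1 ++ ς2) := by
  induction h1 with
  | nil he => simpa using accept_seqR h2 _ he
  | @cons _ _ _ _ p hp hx ha ih =>
      exact Accept.cons (p := false :: p)
        (Finset.mem_union_left _ (Finset.mem_image_of_mem _ hp))
        (by simp [exec, hx]) ih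

lemma accept_parR {i1 i2 : Interaction n M} {ς} (he1 : expEps i1 = true)
    (h : Accept i2 ς) : Accept (par i1 i2) ς := by
  induction h with
  | nil he => exact Accept.nil (by simp [expEps, he1, he])
  | @cons _ _ _ _ p hp hx ha ih =>
      exact Accept.cons (p := true :: p)
        (Finset.mem_union_right _ (Finset.mem_image_of_mem _ hp))
        (by simp [exec, hx]) ih

lemma accept_par {i1 i2 : Interaction n M} {ς1 ς2} (h1 : Accept i1 ς1)
    (h2 : Accept i2 ς2) : Accept (par i1 i2) (ς1 ++ ς2) := by
  induction h1 with
  | nil he => simpa using accept_parR he h2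
  | @cons _ _ _ _ p hp hx ha ih =>
      exact Accept.cons (p := false :: p)
        (Finset.mem_union_left _ (Finset.mem_image_of_mem _ hp))
        (by simp [exec, hx]) ih

lemma avoids_of_prune : ∀ (i : Interaction n M) (k l : Fin n),
    avoids i k = true → avoids (prune i k) l = true → avoids i l = true := by
  intro i k l hk hl
  induction i with
  | empty => rfl
  | act a => simpa [prune, avoids] using hl
  | strict i1 i2 ih1 ih2 =>
      simp only [avoids, prune, Bool.and_eq_true] at hk hl ⊢
      exact ⟨ih1 hk.1 hl.1, ih2 hk.2 hl.2⟩
  | seq i1 i2 ih1 ih2 =>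
      simp only [avoids, prune, Bool.and_eq_true] at hk hl ⊢
      exact ⟨ih1 hk.1 hl.1, ih2 hk.2 hl.2⟩
  | par i1 i2 ih1 ih2 =>
      simp only [avoids, prune, Bool.and_eq_true] at hk hl ⊢
      exact ⟨ih1 hk.1 hl.1, ih2 hk.2 hl.2⟩
  | alt i1 i2 ih1 ih2 =>
      simp only [avoids, Bool.or_eq_true] at hk ⊢
      by_cases h1 : avoids i1 k = true <;> by_cases h2 : avoids i2 k = true
      · simp only [prune, h1, h2, if_pos, avoids, Bool.or_eq_true] at hl
        rcases hl with hl | hl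
        · exact Or.inl (ih1 h1 hl)
        · exact Or.inr (ih2 h2 hl)
      · simp only [prune, h1, h2, if_pos, if_neg] at hl
        exact Or.inl (ih1 h1 hl)
      · rw [show prune (alt i1 i2) k = prune i2 k from by simp [prune, h1]] at hl
        exact Or.inr (ih2 h2 hl)
      · tauto
  | loopStrict i1 ih => rfl
  | loopSeq i1 ih => rfl
  | loopPar i1 ih => rfl

lemma exec_avoids : ∀ (i : Interaction n M) (p : List Bool) (i' : Interaction n M)
    (a : MAction n M) (l : Fin n), p ∈ front i → exec i p = some (i', a) →
    a.lf ≠ l → avoids i' l = true → avoids i l = true := by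
  intro i
  induction i with
  | empty => intro p i' a l _ hx; cases p <;> simp [exec] at hx
  | act b =>
      intro p i' a l _ hx hne _
      cases p with
      | nil =>
          simp [exec] at hx
          obtain ⟨h1, rfl⟩ := hx
          simp [avoids, hne]
      | cons x q => cases x <;> simp [exec] at hx
  | strict i1 i2 ih1 ih2 =>
      intro p i' a l hp hx hne h'
      cases p with
      | nil => simp [exec] at hx
      | cons x q =>
        cases x
        · simp only [exec, Option.map_eq_some_iff] at hx
          obtain ⟨⟨j, b⟩, hj, heq⟩ := hx
          cases heq
          have hq : q ∈ front i1 := by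
            by_cases he1 : expEps i1 = true <;>
              simpa [front, he1] using hp
          simp only [avoids, Bool.and_eq_true] at h' ⊢
          exact ⟨ih1 q _ _ _ hq hj hne h'.1, h'.2⟩
        · simp only [exec] at hx
          by_cases he1 : expEps i1 = true
          · have hq : q ∈ front i2 := by simpa [front, he1] using hp
            simp only [avoids, Bool.and_eq_true]
            exact ⟨expEps_avoids i1 l he1, ih2 q _ _ _ hq hx hne h'⟩
          · simp [front, he1] at hp
  | seq i1 i2 ih1 ih2 =>
      intro p i' a l hp hx hne h'
      cases p with
      | nil => simp [exec] at hx
      | cons x q =>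
        cases x
        · simp only [exec, Option.map_eq_some_iff] at hx
          obtain ⟨⟨j, b⟩, hj, heq⟩ := hx
          cases heq
          have hq : q ∈ front i1 := by
            simp only [front, Finset.mem_union, Finset.mem_image] at hp
            rcases hp with ⟨q', hq', hqq⟩ | ⟨q', _, hqq⟩
            · cases hqq; exact hq'
            · simp at hqq
          simp only [avoids, Bool.and_eq_true] at h' ⊢
          exact ⟨ih1 q _ _ _ hq hj hne h'.1, h'.2⟩
        · simp only [exec, Option.map_eq_some_iff] at hx
          obtain ⟨⟨j, b⟩, hj, heq⟩ := hx
          cases heq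
          have hs := exec_subAt _ _ _ _ hj
          have hp' : q ∈ Finset.filter (fun p =>
              (match subAt i2 p with
               | some (act a) => avoids i1 a.lf
               | _ => false) = true) (front i2) := by
            simp only [front, Finset.mem_union, Finset.mem_image] at hp
            rcases hp with ⟨q', _, hqq⟩ | ⟨q', hq', hqq⟩
            · simp at hqq
            · cases hqq; exact hq'
          have hmem := Finset.mem_filter.mp hp'
          have hcond := hmem.2
          rw [hs] at hcond
          simp only [avoids, Bool.and_eq_true] at h' ⊢
          exact ⟨avoids_of_prune i1 b.lf l hcond h'.1,
            ih2 q _ _ _ hmem.1 hj hne h'.2⟩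
  | alt i1 i2 ih1 ih2 =>
      intro p i' a l hp hx hne h'
      cases p with
      | nil => simp [exec] at hx
      | cons x q =>
        cases x
        · have hq : q ∈ front i1 := by simpa [front] using hp
          simp only [avoids, Bool.or_eq_true]
          exact Or.inl (ih1 q _ _ _ hq hx hne h')
        · have hq : q ∈ front i2 := by simpa [front] using hp
          simp only [avoids, Bool.or_eq_true]
          exact Or.inr (ih2 q _ _ _ hq hx hne h')
  | par i1 i2 ih1 ih2 =>
      intro p i' a l hp hx hne h'
      cases p with
      | nil => simp [exec] at hx
      | cons x q =>
        cases x
        · simp only [exec, Option.map_eq_some_iff] at hx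
          obtain ⟨⟨j, b⟩, hj, heq⟩ := hx
          cases heq
          have hq : q ∈ front i1 := by simpa [front] using hp
          simp only [avoids, Bool.and_eq_true] at h' ⊢
          exact ⟨ih1 q _ _ _ hq hj hne h'.1, h'.2⟩
        · simp only [exec, Option.map_eq_some_iff] at hx
          obtain ⟨⟨j, b⟩, hj, heq⟩ := hx
          cases heq
          have hq : q ∈ front i2 := by simpa [front] using hp
          simp only [avoids, Bool.and_eq_true] at h' ⊢
          exact ⟨h'.1, ih2 q _ _ _ hq hj hne h'.2⟩
  | loopStrict i1 ih => intro _ _ _ _ _ _ _ _; rfl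
  | loopSeq i1 ih => intro _ _ _ _ _ _ _ _; rfl
  | loopPar i1 ih => intro _ _ _ _ _ _ _ _; rfl

lemma accept_avoids {i : Interaction n M} {ς} {l : Fin n} (hA : Accept i ς) :
    (∀ a ∈ ς, a.lf ≠ l) → avoids i l = true := by
  induction hA with
  | nil he => exact fun _ => expEps_avoids _ _ he
  | @cons _ _ a ς p hp hx ha ih =>
      intro hav
      exact exec_avoids _ _ _ _ _ hp hx (hav a (by simp))
        (ih fun b hb => hav b (by simp [hb]))

lemma avoids_trace : ∀ (i : Interaction n M) (l : Fin n), avoids i l = true →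
    ∃ ς : List (MAction n M), Accept i ς ∧ ∀ a ∈ ς, a.lf ≠ l := by
  intro i l h
  induction i with
  | empty => exact ⟨[], Accept.nil rfl, by simp⟩
  | act a =>
      refine ⟨[a], Accept.cons (p := []) (i' := Interaction.empty) (by simp [front]) rfl (Accept.nil rfl), ?_⟩
      simp only [avoids, decide_eq_true_eq] at h
      simpa using h
  | strict i1 i2 ih1 ih2 =>
      simp only [avoids, Bool.and_eq_true] at h
      obtain ⟨ς1, h1, hv1⟩ := ih1 h.1
      obtain ⟨ς2, h2, hv2⟩ := ih2 h.2
      refine ⟨ς1 ++ ς2, accept_strict h1 h2, ?_⟩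
      intro a ha; rcases List.mem_append.mp ha with ha | ha
      exacts [hv1 a ha, hv2 a ha]
  | seq i1 i2 ih1 ih2 =>
      simp only [avoids, Bool.and_eq_true] at h
      obtain ⟨ς1, h1, hv1⟩ := ih1 h.1
      obtain ⟨ς2, h2, hv2⟩ := ih2 h.2
      refine ⟨ς1 ++ ς2, accept_seq h1 h2, ?_⟩
      intro a ha; rcases List.mem_append.mp ha with ha | ha
      exacts [hv1 a ha, hv2 a ha]
  | par i1 i2 ih1 ih2 =>
      simp only [avoids, Bool.and_eq_true] at h
      obtain ⟨ς1, h1, hv1⟩ := ih1 h.1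
      obtain ⟨ς2, h2, hv2⟩ := ih2 h.2
      refine ⟨ς1 ++ ς2, accept_par h1 h2, ?_⟩
      intro a ha; rcases List.mem_append.mp ha with ha | ha
      exacts [hv1 a ha, hv2 a ha]
  | alt i1 i2 ih1 ih2 =>
      simp only [avoids, Bool.or_eq_true] at h
      rcases h with h | h
      · obtain ⟨ς1, h1, hv1⟩ := ih1 h
        exact ⟨ς1, accept_altL h1, hv1⟩
      · obtain ⟨ς2, h2, hv2⟩ := ih2 h
        exact ⟨ς2, accept_altR h2, hv2⟩
  | loopStrict i1 ih => exact ⟨[], Accept.nil rfl, by simp⟩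
  | loopSeq i1 ih => exact ⟨[], Accept.nil rfl, by simp⟩
  | loopPar i1 ih => exact ⟨[], Accept.nil rfl, by simp⟩

end Interaction

/-- `avoids(i,l) = ⊤` iff there exists a trace `ς ∈ Accept(i)`
containing no action occurring on lifeline `l`. -/
theorem avoids_iff_exists_avoiding_trace (n : ℕ) (M : Type)
    (i : Interaction n M) (l : Fin n) :
    avoids i l = true ↔
      ∃ ς : List (MAction n M), Accept i ς ∧ ∀ a ∈ ς, a.lf ≠ l := by
  constructor
  · exact avoids_trace i l
  · rintro ⟨ς, hA, hav⟩
    exact accept_avoids hA hav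
end
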